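/- For u ∈ 𝒢(ℝⁿ) (with 𝒢 the special Colombeau algebra), u = 0 if and only if u(x̃) = 0 in ℝ̃ for all compactly supported generalized points x̃. -/
import Mathlib


/-- A net `r : (0,1] → ℝ` (modelled as a function on `ℝ`, only its values on `(0,1]`
matter) is *moderate* if `|r ε| = O(ε^{-N})` as `ε → 0⁺` for some `N`. -/
def moderate (r : ℝ → ℝ) : Prop :=
  ∃ N : ℕ, ∃ C : ℝ, 0 < C ∧ ∃ ε₀ : ℝ, 0 < ε₀ ∧
    ∀ ε : ℝ, 0 < ε → ε < ε₀ → |r ε| ≤ C * (ε⁻¹) ^ N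

/-- A net is *negligible* if `|r ε| = O(ε^m)` as `ε → 0⁺` for every `m`. -/
def negligible (r : ℝ → ℝ) : Prop :=
  ∀ m : ℕ, ∃ C : ℝ, 0 < C ∧ ∃ ε₀ : ℝ, 0 < ε₀ ∧
    ∀ ε : ℝ, 0 < ε → ε < ε₀ → |r ε| ≤ C * ε ^ m

/-- A net of smooth functions on `ℝⁿ` is moderate: on each compact set, every iterated
derivative grows at most like `ε^{-N}` for some `N`. -/
def SmModerate (n : ℕ) (u : ℝ → (Fin n → ℝ) → ℝ) : Prop :=
  ∀ K : Set (Fin n → ℝ), IsCompact K → ∀ k : ℕ, ∃ N : ℕ, ∃ C : ℝ, 0 < C ∧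
    ∃ ε₀ : ℝ, 0 < ε₀ ∧ ∀ ε : ℝ, 0 < ε → ε < ε₀ →
      ∀ x ∈ K, ‖iteratedFDeriv ℝ k (u ε) x‖ ≤ C * (ε⁻¹) ^ N

/-- A net of smooth functions on `ℝⁿ` is negligible: `sup_K |u_ε| = O(ε^m)` for every
compact `K` and every `m` (estimating the 0-th derivative suffices). -/
def SmNegligible (n : ℕ) (u : ℝ → (Fin n → ℝ) → ℝ) : Prop :=
  ∀ K : Set (Fin n → ℝ), IsCompact K → ∀ m : ℕ, ∃ C : ℝ, 0 < C ∧
    ∃ ε₀ : ℝ, 0 < ε₀ ∧ ∀ ε : ℝ, 0 < ε → ε < ε₀ → ∀ x ∈ K, |u ε x| ≤ C * ε ^ m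

/-- Point value characterization: a moderate net of smooth functions represents `0` in
`𝒢(ℝⁿ)` (i.e. is negligible) iff its value net at every compactly supported
generalized point is a negligible net of reals. -/
theorem zero_iff_zero_at_generalized_points (n : ℕ) (u : ℝ → (Fin n → ℝ) → ℝ)
    (hsm : ∀ ε ∈ Set.Ioc (0 : ℝ) 1, ContDiff ℝ (⊤ : ℕ∞) (u ε)) (hmod : SmModerate n u) :
    SmNegligible n u ↔
      ∀ x : ℝ → (Fin n → ℝ),
        (∃ K : Set (Fin n → ℝ), IsCompact K ∧ ∃ ε₀ : ℝ, 0 < ε₀ ∧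
          ∀ ε : ℝ, 0 < ε → ε < ε₀ → x ε ∈ K) →
        negligible (fun ε => u ε (x ε)) := by
  classical
  constructor
  · rintro hneg x ⟨K, hK, ε₀, hε₀, hx⟩ m
    obtain ⟨C, hC, ε₁, hε₁, h⟩ := hneg K hK m
    exact ⟨C, hC, min ε₀ ε₁, lt_min hε₀ hε₁, fun ε hε hlt =>
      h ε hε (lt_of_lt_of_le hlt (min_le_right _ _)) _
        (hx ε hε (lt_of_lt_of_le hlt (min_le_left _ _)))⟩
  · intro hpt K hK m
    by_cases hKne : K.Nonempty
    · obtain ⟨k₀, hk₀⟩ := hKne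
      have hsel : ∀ ε ∈ Set.Ioc (0:ℝ) 1, ∃ z ∈ K, ∀ y ∈ K, |u ε y| ≤ |u ε z| := by
        intro ε hε
        obtain ⟨z, hz, hmax⟩ := hK.exists_isMaxOn ⟨k₀, hk₀⟩
          (((hsm ε hε).continuous.abs).continuousOn)
        exact ⟨z, hz, fun y hy => hmax hy⟩
      set x : ℝ → (Fin n → ℝ) := fun ε =>
        if h : ε ∈ Set.Ioc (0:ℝ) 1 then (hsel ε h).choose else k₀ with hxdef
      have hxK : ∀ ε, x ε ∈ K := by
        intro ε
        rw [hxdef]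
        by_cases h : ε ∈ Set.Ioc (0:ℝ) 1
        · simp only [h, dif_pos]
          exact (hsel ε h).choose_spec.1
        · simp only [h, dif_neg, not_false_iff]
          exact hk₀
      have hxmax : ∀ ε ∈ Set.Ioc (0:ℝ) 1, ∀ y ∈ K, |u ε y| ≤ |u ε (x ε)| := by
        intro ε hε y hy
        rw [hxdef]
        simp only [hε, dif_pos]
        exact (hsel ε hε).choose_spec.2 y hy
      obtain ⟨C, hC, ε₀, hε₀, h⟩ :=
        hpt x ⟨K, hK, 1, one_pos, fun ε hε _ => hxK ε⟩ m
      refine ⟨C, hC, min ε₀ 1, lt_min hε₀ one_pos, fun ε hε hlt y hy => ?_⟩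
      have h1 : ε ∈ Set.Ioc (0:ℝ) 1 :=
        ⟨hε, le_of_lt (lt_of_lt_of_le hlt (min_le_right _ _))⟩
      exact (hxmax ε h1 y hy).trans (h ε hε (lt_of_lt_of_le hlt (min_le_left _ _)))
    · exact ⟨1, one_pos, 1, one_pos, fun ε hε hlt y hy => absurd ⟨y, hy⟩ hKne⟩
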